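/- Let $H$ be a connected solvable spherical subgroup of $G$ standardly embedded in $B$, and let $\alpha$ be an active root. Then all distinct roots of the family $F(\alpha) = \{\alpha\} \cup \{\beta \in \Psi \mid \alpha - \beta \in \Delta_+\}$ have pairwise distinct restrictions to the torus $S$, and these roots are linearly independent. -/

import Mathlib

open scoped InnerProductSpace

/-- A reduced crystallographic root system in a Euclidean space `V`, together with a chosen
base of simple roots and the (integer) coordinates of each root in this base. -/
structure RootSystemData (V : Type) [NormedAddCommGroup V] [InnerProductSpace ℝ V] where
  /-- the set of roots -/
  roots : Set V
  /-- the set of simple roots (the base) -/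
  simples : Finset V
  finite : roots.Finite
  ne_zero : ∀ α ∈ roots, α ≠ (0 : V)
  neg_mem : ∀ α ∈ roots, -α ∈ roots
  reduced : ∀ α ∈ roots, (2 : ℝ) • α ∉ roots
  reflect_mem : ∀ α ∈ roots, ∀ β ∈ roots,
    β - (2 * ⟪α, β⟫_ℝ / ⟪α, α⟫_ℝ) • α ∈ roots
  cartan_int : ∀ α ∈ roots, ∀ β ∈ roots, ∃ n : ℤ,
    2 * ⟪α, β⟫_ℝ / ⟪α, α⟫_ℝ = (n : ℝ)
  simples_mem : ∀ γ ∈ simples, γ ∈ roots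
  simples_indep : LinearIndependent ℝ (fun γ : simples => (γ : V))
  /-- `coeff α γ` is the coefficient of the simple root `γ` in the root `α` -/
  coeff : V → V → ℤ
  coeff_spec : ∀ α ∈ roots, α = ∑ γ ∈ simples, coeff α γ • γ
  coeff_sign : ∀ α ∈ roots,
    (∀ γ ∈ simples, 0 ≤ coeff α γ) ∨ (∀ γ ∈ simples, coeff α γ ≤ 0)

namespace RootSystemData

variable {V : Type} [NormedAddCommGroup V] [InnerProductSpace ℝ V]

/-- The set of positive roots with respect to the base. -/
def pos (R : RootSystemData V) : Set V :=
  {α ∈ R.roots | ∀ γ ∈ R.simples, 0 ≤ R.coeff α γ}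

/-- The support of a root: the simple roots occurring in it with nonzero coefficient. -/
def Supp (R : RootSystemData V) (α : V) : Finset V :=
  R.simples.filter fun γ => R.coeff α γ ≠ 0

/-- The height of a root: the sum of its coefficients over the simple roots. -/
def height (R : RootSystemData V) (α : V) : ℤ :=
  ∑ γ ∈ R.simples, R.coeff α γ

/-- `s(α)`: the number of unordered representations of `α` as a sum of two positive
roots. -/
noncomputable def numDecomp (R : RootSystemData V) (α : V) : ℕ :=
  {z : Sym2 V | ∃ β ∈ R.pos, ∃ γ ∈ R.pos, z = Sym2.mk β γ ∧ β + γ = α}.ncard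

end RootSystemData

/-- The Lie-theoretic data attached to a connected solvable subgroup `H = S ⋉ N` of a
connected semisimple complex algebraic group `G`, standardly embedded in a Borel subgroup
`B = T ⋉ U`:
* the root system of `G` with respect to `T`, with the base determined by `B`;
* the restriction map `τ : 𝔛(T) ⊗ ℚ → 𝔛(S) ⊗ ℚ` of characters from `T` to the maximal
  torus `S = H ∩ T` of `H` (modelled as a linear map of vector spaces, `W = 𝔛(S) ⊗ ℚ`);
* the nilpotent Lie algebra `L = 𝔲` of the maximal unipotent subgroup `U`, with its root
  space decomposition `𝔲 = ⨁_{α ∈ Δ₊} 𝔤_α`;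
* the Lie algebra `𝔫 ⊆ 𝔲` of the unipotent radical `N = H ∩ U` of `H`, which is a
  subalgebra and is a sum of its `S`-weight components. -/
structure SphericalSetup (V : Type) [NormedAddCommGroup V] [InnerProductSpace ℝ V]
    (W : Type) [AddCommGroup W] [Module ℝ W]
    (L : Type) [LieRing L] [LieAlgebra ℂ L] extends RootSystemData V where
  /-- restriction of characters from `T` to `S` -/
  τ : V →ₗ[ℝ] W
  /-- the root spaces `𝔤_α ⊆ 𝔲` -/
  g : V → Submodule ℂ L
  g_dim : ∀ α ∈ toRootSystemData.pos, Module.finrank ℂ (g α) = 1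
  g_bot : ∀ α, α ∉ toRootSystemData.pos → g α = ⊥
  g_top : (⨆ α ∈ toRootSystemData.pos, g α) = (⊤ : Submodule ℂ L)
  bracket_mem : ∀ (α β : V), ∀ x ∈ g α, ∀ y ∈ g β, ⁅x, y⁆ ∈ g (α + β)
  bracket_ne : ∀ α ∈ toRootSystemData.pos, ∀ β ∈ toRootSystemData.pos,
    α + β ∈ toRootSystemData.pos → ∃ x ∈ g α, ∃ y ∈ g β, ⁅x, y⁆ ≠ (0 : L)
  /-- the Lie algebra `𝔫` of the unipotent radical `N` of `H` -/
  n : Submodule ℂ L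
  n_bracket : ∀ x ∈ n, ∀ y ∈ n, ⁅x, y⁆ ∈ n
  n_weight : n = ⨆ w : W, n ⊓ ⨆ α ∈ {a ∈ toRootSystemData.pos | τ a = w}, g α

namespace SphericalSetup

variable {V : Type} [NormedAddCommGroup V] [InnerProductSpace ℝ V]
  {W : Type} [AddCommGroup W] [Module ℝ W]
  {L : Type} [LieRing L] [LieAlgebra ℂ L]

/-- The `S`-weight subspace `𝔲_w ⊆ 𝔲` of weight `w`. -/
def uSp (S : SphericalSetup V W L) (w : W) : Submodule ℂ L :=
  ⨆ α ∈ {a ∈ S.pos | S.τ a = w}, S.g α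

/-- `c_w`: the codimension of `𝔫_w = 𝔫 ∩ 𝔲_w` in `𝔲_w`. -/
noncomputable def c (S : SphericalSetup V W L) (w : W) : ℕ :=
  Module.finrank ℂ (S.uSp w) - Module.finrank ℂ ↥(S.n ⊓ S.uSp w)

/-- The sphericity of `H` in `G`, via the criterion of Theorem `solvable_spherical`:
`c_w ≤ 1` for every weight `w`, and the weights `w` with `c_w = 1` are linearly
independent in `𝔛(S) ⊗ ℚ`. -/
def Spherical (S : SphericalSetup V W L) : Prop :=
  (∀ w : W, S.c w ≤ 1) ∧
    LinearIndependent ℝ (fun w : {w : W // S.c w = 1} => (w : W))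

/-- The set `Ψ` of active roots: positive roots `α` with `𝔤_α ⊄ 𝔫`. -/
def active (S : SphericalSetup V W L) : Set V :=
  {α ∈ S.pos | ¬ S.g α ≤ S.n}

/-- The family `F(α)` of active roots generated by an active root `α`: the root `α`
together with all active roots subordinate to it. -/
def family (S : SphericalSetup V W L) (α : V) : Set V :=
  insert α {β ∈ S.active | α - β ∈ S.pos}

end SphericalSetup

/-!
Every active root `β` has `c_{τ β} = 1`, so sphericity makes the weights `τ β`, `β ∈ F(α)`,
linearly independent as soon as they are distinct; linear independence of `F(α)` then follows
by pulling back along `τ`. The same independence forbids `α = δ + β` with `α, β, δ` all active.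

For injectivity the key point is that `𝔫 ∩ 𝔲_w` has codimension `≤ 1` in `𝔲_w`: if
`e ∈ 𝔤_δ ∩ 𝔫` and `⁅e, 𝔤_β⁆` is a root space not contained in `𝔫`, then
`{x ∈ 𝔲_{τ β} | ⁅e, x⁆ ∈ 𝔫}` is a proper subspace containing `𝔫 ∩ 𝔲_{τ β}`, hence equal to it.
Now let `β ≠ γ` in `F(α)` with `τ β = τ γ`. If they differ by a positive root `η`, then
`τ η = 0`, so `𝔤_η ⊆ 𝔫`, and iterating `ad e` (`e ∈ 𝔤_η`) from a vector of `𝔤_β ∖ 𝔫` reaches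
`0 ∈ 𝔫`, which pulls back to a contradiction. Otherwise `γ - β` is not a root, so by the root
string through `α` one of `(α - β) + γ`, `(α - γ) + β` is not a root, and a single application
of the pull-back argument with `e ∈ 𝔤_{α - β}` (resp. `𝔤_{α - γ}`) gives the contradiction.
-/

namespace RootSystemData

variable {V : Type} [NormedAddCommGroup V] [InnerProductSpace ℝ V] (R : RootSystemData V)

theorem sub_mem_roots_of_inner_pos {x y : V} (hx : x ∈ R.roots) (hy : y ∈ R.roots)
    (hxy : 0 < ⟪x, y⟫_ℝ) (hne : x ≠ y) : x - y ∈ R.roots := by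
  obtain ⟨n, hn⟩ := R.cartan_int x hx y hy
  obtain ⟨m, hm⟩ := R.cartan_int y hy x hx
  have hxx : 0 < ⟪x, x⟫_ℝ := real_inner_self_pos.2 (R.ne_zero x hx)
  have hyy : 0 < ⟪y, y⟫_ℝ := real_inner_self_pos.2 (R.ne_zero y hy)
  have hn' : 2 * ⟪x, y⟫_ℝ = n * ⟪x, x⟫_ℝ := by field_simp at hn; linarith
  have hm' : 2 * ⟪x, y⟫_ℝ = m * ⟪y, y⟫_ℝ := by
    rw [real_inner_comm] at hm; field_simp at hm; linarith
  have hn1 : 1 ≤ n := by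
    have : (0 : ℝ) < n := by nlinarith
    exact_mod_cast this
  have hm1 : 1 ≤ m := by
    have : (0 : ℝ) < m := by nlinarith
    exact_mod_cast this
  rcases (show n = 1 ∨ m = 1 ∨ (2 ≤ n ∧ 2 ≤ m) by omega) with rfl | rfl | ⟨hn2, hm2⟩
  · have hyx := R.reflect_mem x hx y hy
    rw [hn, Int.cast_one, one_smul] at hyx
    simpa using R.neg_mem _ hyx
  · have hxy := R.reflect_mem y hy x hx
    rwa [hm, Int.cast_one, one_smul] at hxy
  · -- both Cartan integers `≥ 2` force `‖x - y‖² ≤ 0`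
    have hn2' : (2 : ℝ) ≤ n := by exact_mod_cast hn2
    have hm2' : (2 : ℝ) ≤ m := by exact_mod_cast hm2
    have : ⟪x - y, x - y⟫_ℝ ≤ 0 := by
      rw [inner_sub_sub_self, real_inner_comm x y]; nlinarith
    exact absurd (sub_eq_zero.1 (real_inner_self_nonpos.1 this)) hne

theorem mem_roots_or_neg_mem_of_add_mem_of_sub_mem {x η : V} (hx : x ∈ R.roots) (hη : η ≠ 0)
    (hadd : x + η ∈ R.roots) (hsub : x - η ∈ R.roots) : η ∈ R.roots ∨ -η ∈ R.roots := by
  by_cases hpos : 0 < ⟪x, x + η⟫_ℝ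
  · right
    simpa using R.sub_mem_roots_of_inner_pos hx hadd hpos fun h => hη (left_eq_add.1 h)
  by_cases hneg : 0 < ⟪x, x - η⟫_ℝ
  · left
    simpa using R.sub_mem_roots_of_inner_pos hx hsub hneg fun h => hη (sub_eq_self.1 h.symm)
  rw [inner_add_right] at hpos
  rw [inner_sub_right] at hneg
  linarith [real_inner_self_pos.2 (R.ne_zero x hx)]

theorem coeff_neg {x : V} (hx : x ∈ R.roots) {γ : V} (hγ : γ ∈ R.simples) :
    R.coeff (-x) γ = -R.coeff x γ := by
  have hsum : ∑ i : R.simples, ((R.coeff (-x) i + R.coeff x i : ℤ) : ℝ) • (i : V) = 0 := by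
    simp only [Int.cast_add, add_smul, Finset.sum_add_distrib, Int.cast_smul_eq_zsmul]
    rw [Finset.sum_coe_sort R.simples (fun i => R.coeff (-x) i • i),
      Finset.sum_coe_sort R.simples (fun i => R.coeff x i • i),
      ← R.coeff_spec _ (R.neg_mem x hx), ← R.coeff_spec x hx, neg_add_cancel]
  have := linearIndependent_iff'.1 R.simples_indep Finset.univ _ hsum ⟨γ, hγ⟩ (Finset.mem_univ _)
  have : R.coeff (-x) γ + R.coeff x γ = 0 := by exact_mod_cast this
  omega

theorem mem_pos_or_neg_mem_pos {x : V} (hx : x ∈ R.roots) : x ∈ R.pos ∨ -x ∈ R.pos := by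
  refine (R.coeff_sign x hx).imp (fun h => ⟨hx, h⟩) fun h => ⟨R.neg_mem x hx, fun γ hγ => ?_⟩
  rw [R.coeff_neg hx hγ]
  exact neg_nonneg.2 (h γ hγ)

theorem exists_add_nsmul_notMem_pos (β : V) {η : V} (hη : η ∈ R.pos) :
    ∃ N : ℕ, β + N • η ∉ R.pos := by
  by_contra! h
  have hinj : Function.Injective fun N : ℕ => β + N • η := fun a b hab => by
    have : (a : ℝ) • η = (b : ℝ) • η := by
      simpa only [add_right_inj, Nat.cast_smul_eq_nsmul] using hab
    exact Nat.cast_inj.mp (smul_left_injective ℝ (R.ne_zero η hη.1) this)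
  exact (R.finite.subset fun _ hx => hx.1).not_infinite
    (Set.infinite_of_injective_forall_mem hinj h)

end RootSystemData

theorem LinearIndepOn.ne_add {K M : Type*} [Ring K] [Nontrivial K] [AddCommGroup M]
    [Module K M] {s : Set M} (hs : LinearIndepOn K id s) {a b c : M} (ha : a ∈ s) (hb : b ∈ s)
    (hc : c ∈ s) : a ≠ b + c := by
  rintro rfl
  by_cases hb' : b = b + c
  · exact hs.ne_zero hc (left_eq_add.1 hb')
  by_cases hc' : c = b + c
  · exact hs.ne_zero hb (right_eq_add.1 hc')
  refine hs.notMem_span ha ?_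
  rw [Set.image_id]
  exact add_mem (Submodule.subset_span ⟨hb, hb'⟩) (Submodule.subset_span ⟨hc, hc'⟩)

theorem Submodule.eq_of_le_of_lt_of_finrank_sub_le_one {K M : Type*} [DivisionRing K]
    [AddCommGroup M] [Module K M] [FiniteDimensional K M] {P Q U : Submodule K M} (hPQ : P ≤ Q)
    (hQU : Q < U) (hcodim : Module.finrank K U - Module.finrank K P ≤ 1) : P = Q := by
  have hlt := Submodule.finrank_lt_finrank_of_lt hQU
  exact Submodule.eq_of_le_of_finrank_le hPQ (by omega)

namespace SphericalSetup

variable {V : Type} [NormedAddCommGroup V] [InnerProductSpace ℝ V]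
  {W : Type} [AddCommGroup W] [Module ℝ W]
  {L : Type} [LieRing L] [LieAlgebra ℂ L] (S : SphericalSetup V W L)

theorem g_le_uSp (μ : V) : S.g μ ≤ S.uSp (S.τ μ) := by
  by_cases hμ : μ ∈ S.pos
  · exact le_biSup S.g (show μ ∈ {a ∈ S.pos | S.τ a = S.τ μ} from ⟨hμ, rfl⟩)
  · simp [S.g_bot μ hμ]

theorem lie_mem_uSp {δ : V} {e : L} (he : e ∈ S.g δ) {w : W} {x : L} (hx : x ∈ S.uSp w) :
    ⁅e, x⁆ ∈ S.uSp (S.τ δ + w) := by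
  suffices S.uSp w ≤ (S.uSp (S.τ δ + w)).comap (LieAlgebra.ad ℂ L e) from this hx
  refine iSup₂_le fun μ hμ y hy => ?_
  have := S.g_le_uSp (δ + μ) (S.bracket_mem δ μ e he y hy)
  rwa [map_add, hμ.2] at this

theorem exists_mem_g_ne_zero {μ : V} (hμ : μ ∈ S.pos) : ∃ x ∈ S.g μ, x ≠ 0 :=
  Submodule.exists_mem_ne_zero_of_ne_bot fun h => by
    have := S.g_dim μ hμ
    rw [h, finrank_bot] at this
    exact zero_ne_one this

theorem exists_mem_g_notMem_n {μ : V} (hμ : μ ∈ S.active) : ∃ x ∈ S.g μ, x ∉ S.n :=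
  SetLike.not_le_iff_exists.1 hμ.2

theorem span_singleton_eq_g {μ : V} (hμ : μ ∈ S.pos) {x : L} (hx : x ∈ S.g μ) (hx0 : x ≠ 0) :
    Submodule.span ℂ {x} = S.g μ := by
  have : FiniteDimensional ℂ (S.g μ) := .of_finrank_pos (by rw [S.g_dim μ hμ]; norm_num)
  refine Submodule.eq_of_le_of_finrank_le ((Submodule.span_singleton_le_iff_mem _ _).2 hx) ?_
  rw [finrank_span_singleton hx0, S.g_dim μ hμ]

theorem notMem_n_of_mem_g {μ : V} (hμ : μ ∈ S.active) {x : L} (hx : x ∈ S.g μ) (hx0 : x ≠ 0) :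
    x ∉ S.n := fun hxn =>
  hμ.2 (S.span_singleton_eq_g hμ.1 hx hx0 ▸ (Submodule.span_singleton_le_iff_mem _ _).2 hxn)

theorem lie_ne_zero {μ ν : V} (hμ : μ ∈ S.pos) (hν : ν ∈ S.pos) (hμν : μ + ν ∈ S.pos) {x y : L}
    (hx : x ∈ S.g μ) (hx0 : x ≠ 0) (hy : y ∈ S.g ν) (hy0 : y ≠ 0) : ⁅x, y⁆ ≠ 0 := by
  obtain ⟨x', hx', y', hy', hne⟩ := S.bracket_ne μ hμ ν hν hμν
  rw [← S.span_singleton_eq_g hμ hx hx0, Submodule.mem_span_singleton] at hx'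
  rw [← S.span_singleton_eq_g hν hy hy0, Submodule.mem_span_singleton] at hy'
  obtain ⟨a, rfl⟩ := hx'
  obtain ⟨b, rfl⟩ := hy'
  intro h
  exact hne (by rw [smul_lie, lie_smul, h, smul_zero, smul_zero])

theorem Spherical.linearIndepOn {S : SphericalSetup V W L} (hS : S.Spherical) :
    LinearIndepOn ℝ id {w | S.c w = 1} :=
  hS.2

theorem mem_active_of_mem_family {α β : V} (hα : α ∈ S.active) (hβ : β ∈ S.family α) :
    β ∈ S.active :=
  hβ.elim (· ▸ hα) (·.1)

variable [FiniteDimensional ℂ L]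

theorem c_tau_eq_one (hc : ∀ w, S.c w ≤ 1) {β : V} (hβ : β ∈ S.active) : S.c (S.τ β) = 1 := by
  have hlt : S.n ⊓ S.uSp (S.τ β) < S.uSp (S.τ β) :=
    inf_le_right.lt_of_ne fun h => hβ.2 ((S.g_le_uSp β).trans (h ▸ inf_le_left))
  have := Submodule.finrank_lt_finrank_of_lt hlt
  have := hc (S.τ β)
  unfold SphericalSetup.c at this ⊢
  omega

theorem notMem_active_of_add_eq (hS : S.Spherical) {α β δ : V} (hα : α ∈ S.active)
    (hβ : β ∈ S.active) (hsum : δ + β = α) : δ ∉ S.active := fun hδ =>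
  hS.linearIndepOn.ne_add (S.c_tau_eq_one hS.1 hα) (S.c_tau_eq_one hS.1 hδ)
    (S.c_tau_eq_one hS.1 hβ) (by rw [← hsum, map_add])

theorem mem_n_of_lie_mem_n (hc : ∀ w, S.c w ≤ 1) {β δ : V} (hβ : β ∈ S.pos) (hδ : δ ∈ S.pos)
    (hδβ : δ + β ∈ S.active) {e : L} (he : e ∈ S.g δ) (he0 : e ≠ 0) (hen : e ∈ S.n) {x : L}
    (hx : x ∈ S.uSp (S.τ β)) (hex : ⁅e, x⁆ ∈ S.n) : x ∈ S.n := by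
  set M := S.uSp (S.τ β) ⊓ S.n.comap (LieAlgebra.ad ℂ L e)
  obtain ⟨y, hy, hy0⟩ := S.exists_mem_g_ne_zero hβ
  have hey : ⁅e, y⁆ ∉ S.n := S.notMem_n_of_mem_g hδβ (S.bracket_mem δ β e he y hy)
    (S.lie_ne_zero hδ hβ hδβ.1 he he0 hy hy0)
  have hnM : S.n ⊓ S.uSp (S.τ β) ≤ M := fun z hz => ⟨hz.2, S.n_bracket e hen z hz.1⟩
  have hMU : M < S.uSp (S.τ β) :=
    SetLike.lt_iff_le_and_exists.2 ⟨inf_le_left, y, S.g_le_uSp β hy, fun h => hey h.2⟩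
  have hxM : x ∈ M := ⟨hx, hex⟩
  rw [← Submodule.eq_of_le_of_lt_of_finrank_sub_le_one hnM hMU (hc _)] at hxM
  exact hxM.1

theorem tau_ne_of_add_eq (hS : S.Spherical) {β γ η : V} (hβ : β ∈ S.active) (hγ : γ ∈ S.active)
    (hη : η ∈ S.pos) (hsum : η + β = γ) : S.τ β ≠ S.τ γ := by
  intro hτ
  have hτη : S.τ η = 0 := add_eq_right.1 (by rw [← map_add, hsum, hτ])
  have hηn : S.g η ≤ S.n := by_contra fun h =>
    hS.linearIndepOn.ne_zero (S.c_tau_eq_one hS.1 ⟨hη, h⟩) hτη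
  obtain ⟨e, he, he0⟩ := S.exists_mem_g_ne_zero hη
  obtain ⟨y, hy, hyn⟩ := S.exists_mem_g_notMem_n hβ
  obtain ⟨N, hN⟩ := S.exists_add_nsmul_notMem_pos β hη
  set ad := LieAlgebra.ad ℂ L e
  have hg : ∀ k : ℕ, (ad ^ k) y ∈ S.g (β + k • η) := by
    intro k
    induction k with
    | zero => simpa using hy
    | succ k ih =>
      rw [pow_succ', Module.End.mul_apply, LieAlgebra.ad_apply,
        show β + (k + 1) • η = η + (β + k • η) by rw [succ_nsmul]; abel]
      exact S.bracket_mem η _ e he _ ih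
  have hu : ∀ k : ℕ, (ad ^ k) y ∈ S.uSp (S.τ β) := fun k => by
    simpa [hτη] using S.g_le_uSp _ (hg k)
  have hdescend : ∀ k : ℕ, (ad ^ k) y ∈ S.n → y ∈ S.n := by
    intro k
    induction k with
    | zero => simp
    | succ k ih =>
      rw [pow_succ', Module.End.mul_apply, LieAlgebra.ad_apply]
      exact fun h => ih (S.mem_n_of_lie_mem_n hS.1 hβ.1 hη (hsum ▸ hγ) he he0 (hηn he) (hu k) h)
  have hzero : (ad ^ N) y = 0 := by simpa [S.g_bot _ hN] using hg N
  exact hyn (hdescend N (hzero ▸ S.n.zero_mem))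

theorem tau_ne_of_add_notMem_pos (hS : S.Spherical) {α β γ δ : V} (hα : α ∈ S.active)
    (hβ : β ∈ S.active) (hγ : γ ∈ S.active) (hδ : δ ∈ S.pos) (hsum : δ + β = α)
    (hδγ : δ + γ ∉ S.pos) : S.τ β ≠ S.τ γ := by
  intro hτ
  have hδn : S.g δ ≤ S.n := by_contra fun h =>
    S.notMem_active_of_add_eq hS hα hβ hsum ⟨hδ, h⟩
  obtain ⟨e, he, he0⟩ := S.exists_mem_g_ne_zero hδ
  obtain ⟨y, hy, hyn⟩ := S.exists_mem_g_notMem_n hγ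
  have hey : ⁅e, y⁆ = 0 := by simpa [S.g_bot _ hδγ] using S.bracket_mem δ γ e he y hy
  have hyu : y ∈ S.uSp (S.τ β) := hτ ▸ S.g_le_uSp γ hy
  exact hyn (S.mem_n_of_lie_mem_n hS.1 hβ.1 hδ (hsum ▸ hα) he he0 (hδn he) hyu
    (hey ▸ S.n.zero_mem))

theorem tau_ne_of_sub_mem_pos (hS : S.Spherical) {α β γ : V} (hα : α ∈ S.active)
    (hβ : β ∈ S.active) (hγ : γ ∈ S.active) (hαβ : α - β ∈ S.pos) (hαγ : α - γ ∈ S.pos)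
    (hne : β ≠ γ) : S.τ β ≠ S.τ γ := by
  by_cases hγβ : γ - β ∈ S.pos
  · exact S.tau_ne_of_add_eq hS hβ hγ hγβ (sub_add_cancel γ β)
  by_cases hβγ : β - γ ∈ S.pos
  · exact (S.tau_ne_of_add_eq hS hγ hβ hβγ (sub_add_cancel β γ)).symm
  have hroot : γ - β ∉ S.roots := fun h =>
    (S.mem_pos_or_neg_mem_pos h).elim hγβ fun h' => hβγ (by rwa [neg_sub] at h')
  -- the `(γ - β)`-string through `α` would otherwise make `±(γ - β)` a root
  have hstring : α + (γ - β) ∉ S.roots ∨ α - (γ - β) ∉ S.roots := by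
    by_contra! h
    refine (S.mem_roots_or_neg_mem_of_add_mem_of_sub_mem hα.1.1 (sub_ne_zero.2 hne.symm)
      h.1 h.2).elim hroot fun h' => hroot ?_
    simpa using S.neg_mem _ h'
  rcases hstring with h | h
  · refine S.tau_ne_of_add_notMem_pos hS hα hβ hγ hαβ (sub_add_cancel α β) fun hp => h ?_
    convert hp.1 using 1; abel
  · refine (S.tau_ne_of_add_notMem_pos hS hα hγ hβ hαγ (sub_add_cancel α γ) fun hp => h ?_).symm
    convert hp.1 using 1; abel

theorem injOn_tau_family (hS : S.Spherical) {α : V} (hα : α ∈ S.active) :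
    Set.InjOn S.τ (S.family α) := by
  rintro β (rfl | ⟨hβ, hαβ⟩) γ (rfl | ⟨hγ, hαγ⟩) hτ
  · rfl
  · exact (S.tau_ne_of_add_eq hS hγ hα hαγ (sub_add_cancel β γ) hτ.symm).elim
  · exact (S.tau_ne_of_add_eq hS hβ hα hαβ (sub_add_cancel γ β) hτ).elim
  · by_contra hne
    exact S.tau_ne_of_sub_mem_pos hS hα hβ hγ hαβ hαγ hne hτ

end SphericalSetup

/-- Let `H` be a connected solvable spherical subgroup of `G` standardly embedded in `B`
and `α` an active root.  Then the distinct roots of the family `F(α)` have pairwise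
distinct restrictions to the maximal torus `S` of `H`, and the roots of `F(α)` are
linearly independent. -/
theorem family_tau_injOn_and_linearIndependent
    {V : Type} [NormedAddCommGroup V] [InnerProductSpace ℝ V]
    {W : Type} [AddCommGroup W] [Module ℝ W]
    {L : Type} [LieRing L] [LieAlgebra ℂ L] [FiniteDimensional ℂ L]
    (S : SphericalSetup V W L) (hS : S.Spherical)
    {α : V} (hα : α ∈ S.active) :
    Set.InjOn S.τ (S.family α) ∧
      LinearIndependent ℝ (fun β : S.family α => (β : V)) := by
  have hinj := S.injOn_tau_family hS hα
  have himage : S.τ '' S.family α ⊆ {w | S.c w = 1} := by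
    rintro _ ⟨β, hβ, rfl⟩
    exact S.c_tau_eq_one hS.1 (S.mem_active_of_mem_family hα hβ)
  exact ⟨hinj, LinearIndepOn.of_comp S.τ
    ((linearIndepOn_iff_image hinj).2 (hS.linearIndepOn.mono himage))⟩
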